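/- A permutation w of {1,…,n} is dominant if and only if w is maximal in two-sided weak order among permutations of its shape; that is, w avoids 132 if and only if there is no permutation u ≠ w with w ≤_{LR} u and α(u) = α(w). -/

import Mathlib

open scoped Classical

noncomputable section

namespace RajRegularity

variable {n : ℕ}

/-- Maximal length of an increasing subsequence of `w(i), …, w(n)` beginning with `w(i)`:
the largest cardinality of a set `s` of positions that contains `i`, consists of positions
`≥ i`, and on which `w` is strictly increasing. -/
def lisFrom (w : Equiv.Perm (Fin n)) (i : Fin n) : ℕ :=
  (Finset.univ.filter fun s : Finset (Fin n) =>
      i ∈ s ∧ (∀ j ∈ s, i ≤ j) ∧ ∀ j ∈ s, ∀ k ∈ s, j < k → w j < w k).sup Finset.card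

/-- `rajCode w i = (n − i + 1) −` (maximal length of an increasing subsequence of
`w(i), …, w(n)` beginning with `w(i)`); here positions are 0-based, so the number of
positions `≥ i` is `n - i`. -/
def rajCode (w : Equiv.Perm (Fin n)) (i : Fin n) : ℕ :=
  (n - (i : ℕ)) - lisFrom w i

/-- The Rajchgot index `raj w = Σᵢ rajCode w i`. -/
def raj (w : Equiv.Perm (Fin n)) : ℕ := ∑ i, rajCode w i

/-- The number of inversions of `w`: pairs of positions `i < j` with `w i > w j`. -/
def invNum (w : Equiv.Perm (Fin n)) : ℕ :=
  (Finset.univ.filter fun p : Fin n × Fin n => p.1 < p.2 ∧ w p.2 < w p.1).card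

/-- The `i`-th entry of the inv code: `ℓ_i(w) = #{ j : i < j, w j < w i }`. -/
def ellCode (w : Equiv.Perm (Fin n)) (i : Fin n) : ℕ :=
  (Finset.univ.filter fun j : Fin n => i < j ∧ w j < w i).card

/-- The set of descent positions of `w` (0-based position `j` with `w j > w (j+1)`). -/
def descents (w : Equiv.Perm (Fin n)) : Finset (Fin n) :=
  Finset.univ.filter fun j : Fin n =>
    if h : (j : ℕ) + 1 < n then w ⟨(j : ℕ) + 1, h⟩ < w j else False

/-- The major index: the sum of the (1-based) descent positions of `w`. -/
def maj (w : Equiv.Perm (Fin n)) : ℕ := ∑ j ∈ descents w, ((j : ℕ) + 1)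

/-- `mCode w i`: the number of descents of `w` at positions `≥ i`. -/
def mCode (w : Equiv.Perm (Fin n)) (i : Fin n) : ℕ :=
  ((descents w).filter fun j => i ≤ j).card

/-- `w` is dominant iff it avoids the pattern 132. -/
def Dominant (w : Equiv.Perm (Fin n)) : Prop :=
  ¬ ∃ i j k : Fin n, i < j ∧ j < k ∧ w i < w k ∧ w k < w j

/-- `w` is fireworks iff there are no positions `i < j` with `w j < w (j+1) < w i`. -/
def Fireworks (w : Equiv.Perm (Fin n)) : Prop :=
  ¬ ∃ (i j : Fin n) (h : (j : ℕ) + 1 < n),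
      i < j ∧ w j < w ⟨(j : ℕ) + 1, h⟩ ∧ w ⟨(j : ℕ) + 1, h⟩ < w i

/-- `w` is inverse fireworks iff `w⁻¹` is fireworks. -/
def InvFireworks (w : Equiv.Perm (Fin n)) : Prop := Fireworks w⁻¹

/-- `w` is a valley permutation: for some `a`, it is strictly decreasing on positions `≤ a`
and strictly increasing on positions `≥ a`. -/
def Valley (w : Equiv.Perm (Fin n)) : Prop :=
  ∃ a : ℕ, (∀ i j : Fin n, i < j → (j : ℕ) ≤ a → w j < w i) ∧
    ∀ i j : Fin n, a ≤ (i : ℕ) → i < j → w i < w j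

/-- `eps w i` is the (1-based) blob index `ε_i(w) = i + r_i(w)`. -/
def eps (w : Equiv.Perm (Fin n)) (i : Fin n) : ℕ := (i : ℕ) + 1 + rajCode w i

/-- The shape of `w`: `α_k(w) = #{ i : ε_i(w) = k }` (here `k : Fin n` stands for the
1-based index `k + 1`). -/
def shape (w : Equiv.Perm (Fin n)) : Fin n → ℕ := fun k =>
  (Finset.univ.filter fun i : Fin n => eps w i = (k : ℕ) + 1).card

/-- Dominance order on shapes: `α ⪰ β` iff every tail sum of `α` is at least the
corresponding tail sum of `β`. -/
def Dominates (α β : Fin n → ℕ) : Prop :=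
  ∀ m : Fin n,
    ∑ k ∈ Finset.univ.filter (fun k : Fin n => m ≤ k), β k ≤
      ∑ k ∈ Finset.univ.filter (fun k : Fin n => m ≤ k), α k

/-- Right weak order: `u ≤_R w` iff `w = u * v` length-additively. -/
def leR (u w : Equiv.Perm (Fin n)) : Prop :=
  ∃ v : Equiv.Perm (Fin n), w = u * v ∧ invNum w = invNum u + invNum v

/-- Left weak order: `u ≤_L w` iff `w = v * u` length-additively. -/
def leL (u w : Equiv.Perm (Fin n)) : Prop :=
  ∃ v : Equiv.Perm (Fin n), w = v * u ∧ invNum w = invNum v + invNum u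

/-- Two-sided weak order: the transitive closure of the union of left and right weak
orders (both are reflexive, so we may use the reflexive-transitive closure). -/
def leLR (u w : Equiv.Perm (Fin n)) : Prop :=
  Relation.ReflTransGen (fun a b : Equiv.Perm (Fin n) => leL a b ∨ leR a b) u w

/-- The maximum of the block of the set partition `π(w)` containing the value `v`;
the block of `v` is `{ v' : ε_{w⁻¹ v'}(w) = ε_{w⁻¹ v}(w) }`. -/
def blockMax (w : Equiv.Perm (Fin n)) (v : Fin n) : ℕ :=
  ((Finset.univ.filter fun v' : Fin n => eps w (w⁻¹ v') = eps w (w⁻¹ v)).max'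
      ⟨v, Finset.mem_filter.mpr ⟨Finset.mem_univ v, rfl⟩⟩).val

/-- The fireworks map `Φ`: the one-line word of `Φ w` lists the blocks of `π(w)` in
increasing order of their maxima, each block written in decreasing order.  Equivalently,
`Φ w` sorts the values by the key (max of block, value reversed), lexicographically. -/
def Phi (w : Equiv.Perm (Fin n)) : Equiv.Perm (Fin n) :=
  Tuple.sort fun v : Fin n => n * blockMax w v + (n - 1 - (v : ℕ))

/-- The inverse fireworks map `Φ_inv w = Φ(w⁻¹)⁻¹`. -/
def PhiInv (w : Equiv.Perm (Fin n)) : Equiv.Perm (Fin n) := (Phi w⁻¹)⁻¹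

/-- Partial sums of a sequence of block sizes. -/
def psum (a : ℕ → ℕ) (m : ℕ) : ℕ := ∑ j ∈ Finset.range m, a j

/-- The index of the block (interval `[psum a m, psum a (m+1))`) containing the value `v`. -/
def blockIdx (n : ℕ) (a : ℕ → ℕ) (v : Fin n) : ℕ :=
  ((Finset.range n).filter fun m => psum a (m + 1) ≤ (v : ℕ)).card

/-- The layered permutation with block sizes `a 0, a 1, …`: it reverses each of the
consecutive intervals `[psum a m, psum a (m+1))` of `{0, …, n-1}`.  Equivalently, its
one-line word sorts the values by (block index, value reversed) lexicographically. -/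
def layered (n : ℕ) (a : ℕ → ℕ) : Equiv.Perm (Fin n) :=
  Tuple.sort fun v : Fin n => n * blockIdx n a v + (n - 1 - (v : ℕ))

/-- The layered permutation `e_α` associated to a shape `α : Fin n → ℕ`. -/
def eOf (α : Fin n → ℕ) : Equiv.Perm (Fin n) :=
  layered n fun m => if h : m < n then α ⟨m, h⟩ else 0

end RajRegularity

/-!
The shape of `w` records the multiset of the values `lisFrom w i`, so it determines
`raj w = ∑ i, (n - i - lisFrom w i)`. An increasing run from `i` uses only `i` and later larger
values, hence `invNum w ≤ raj w`, with equality when `w` avoids `132`: then `i` together with all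
later larger values is increasing. Since `invNum` strictly increases along the two-sided weak
order, a dominant `w` is maximal among permutations of its shape.

Conversely, a `132` pattern can be taken with adjacent values `w p ⋖ w q` for its `1` and `2`.
If some `k ≠ q` after `p` with `w p < w k` has `lisFrom w q ≤ lisFrom w k`, exchanging these two
values (a left weak-order cover) leaves every `lisFrom` unchanged. Otherwise exchanging the ascent
between `p` and the `3` at which the values cross `w q` (a right weak-order cover) permutes the
values of `lisFrom`. Either way the shape is kept. Both claims are checked
through the recursion `lisFrom w i = sup {lisFrom w k | i < k, w i < w k} + 1`, whose solution is
unique.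
-/

lemma Finset.sup_erase_of_le {α β : Type*} [DecidableEq α] [SemilatticeSup β] [OrderBot β]
    {s : Finset α} {f : α → β} {a b : α} (ha : a ∈ s) (hb : b ∈ s.erase a)
    (hab : f a ≤ f b) :
    (s.erase a).sup f = s.sup f := by
  rw [← Finset.insert_erase ha, Finset.sup_insert, Finset.erase_insert_eq_erase,
    Finset.erase_eq_of_notMem (Finset.notMem_erase a s),
    sup_eq_right.mpr (hab.trans (Finset.le_sup hb))]

lemma Equiv.swap_lt_swap_iff_of_covBy {α : Type*} [LinearOrder α] [DecidableEq α] {a b x y : α}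
    (hab : a ⋖ b) (hxy : ¬(x = a ∧ y = b)) (hyx : ¬(x = b ∧ y = a)) :
    Equiv.swap a b x < Equiv.swap a b y ↔ x < y := by
  have hlt := hab.lt
  rw [Equiv.swap_apply_def, Equiv.swap_apply_def]
  split_ifs <;> subst_vars <;> simp_all <;> constructor <;> intro h
  all_goals first
    | exact h.trans hlt | exact hlt.trans h
    | exact lt_of_le_of_ne (hab.ge_of_gt h) (Ne.symm ‹_›)
    | exact lt_of_le_of_ne (hab.le_of_lt h) ‹_›

lemma exists_covBy_of_le_of_not {α : Type*} [LinearOrder α] [LocallyFiniteOrder α]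
    {P : α → Prop} {a b : α} (hab : a ≤ b) (ha : P a) (hb : ¬P b) :
    ∃ x y, x ⋖ y ∧ a ≤ x ∧ y ≤ b ∧ P x ∧ ¬P y := by
  set s := (Finset.Icc a b).filter P
  have hs : s.Nonempty :=
    ⟨a, Finset.mem_filter.mpr ⟨Finset.mem_Icc.mpr ⟨le_rfl, hab⟩, ha⟩⟩
  obtain ⟨hx, hPx⟩ := Finset.mem_filter.mp (s.max'_mem hs)
  obtain ⟨hax, hxb⟩ := Finset.mem_Icc.mp hx
  obtain ⟨y, hxy, hyb⟩ := exists_covBy_le_of_lt (lt_of_le_of_ne hxb fun h => hb (h ▸ hPx))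
  refine ⟨_, y, hxy, hax, hyb, hPx, fun hPy => hxy.lt.not_ge (s.le_max' y ?_)⟩
  exact Finset.mem_filter.mpr ⟨Finset.mem_Icc.mpr ⟨hax.trans hxy.lt.le, hyb⟩, hPy⟩

namespace RajRegularity

variable {n : ℕ}

def IsIncreasingFrom (w : Equiv.Perm (Fin n)) (i : Fin n) (s : Finset (Fin n)) : Prop :=
  i ∈ s ∧ (∀ j ∈ s, i ≤ j) ∧ ∀ j ∈ s, ∀ k ∈ s, j < k → w j < w k

def largerAfter (w : Equiv.Perm (Fin n)) (i : Fin n) : Finset (Fin n) :=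
  Finset.univ.filter fun k => i < k ∧ w i < w k

section lisFrom

variable {w : Equiv.Perm (Fin n)} {i k : Fin n} {s : Finset (Fin n)}

lemma mem_largerAfter : k ∈ largerAfter w i ↔ i < k ∧ w i < w k := by
  simp [largerAfter]

lemma isIncreasingFrom_singleton (w : Equiv.Perm (Fin n)) (i : Fin n) :
    IsIncreasingFrom w i {i} := by
  simp [IsIncreasingFrom]

lemma mem_filter_isIncreasingFrom :
    s ∈ (Finset.univ.filter fun s : Finset (Fin n) =>
      i ∈ s ∧ (∀ j ∈ s, i ≤ j) ∧ ∀ j ∈ s, ∀ k ∈ s, j < k → w j < w k) ↔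
      IsIncreasingFrom w i s := by
  simp [IsIncreasingFrom]

lemma le_lisFrom (hs : IsIncreasingFrom w i s) : s.card ≤ lisFrom w i :=
  Finset.le_sup (mem_filter_isIncreasingFrom.mpr hs)

lemma lisFrom_le {m : ℕ} (h : ∀ s, IsIncreasingFrom w i s → s.card ≤ m) :
    lisFrom w i ≤ m :=
  Finset.sup_le fun s hs => h s (mem_filter_isIncreasingFrom.mp hs)

lemma exists_isIncreasingFrom_card_eq (w : Equiv.Perm (Fin n)) (i : Fin n) :
    ∃ s, IsIncreasingFrom w i s ∧ s.card = lisFrom w i := by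
  obtain ⟨s, hs, heq⟩ := Finset.exists_mem_eq_sup _
    ⟨{i}, mem_filter_isIncreasingFrom.mpr (isIncreasingFrom_singleton w i)⟩ Finset.card
  exact ⟨s, mem_filter_isIncreasingFrom.mp hs, heq.symm⟩

lemma IsIncreasingFrom.erase_subset (hs : IsIncreasingFrom w i s) :
    s.erase i ⊆ largerAfter w i := by
  intro j hj
  obtain ⟨hji, hjs⟩ := Finset.mem_erase.mp hj
  have hij : i < j := lt_of_le_of_ne (hs.2.1 j hjs) (Ne.symm hji)
  exact mem_largerAfter.mpr ⟨hij, hs.2.2 i hs.1 j hjs hij⟩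

lemma IsIncreasingFrom.insert (hk : k ∈ largerAfter w i) (hs : IsIncreasingFrom w k s) :
    IsIncreasingFrom w i (insert i s) := by
  obtain ⟨hik, hwik⟩ := mem_largerAfter.mp hk
  have hlt : ∀ j ∈ s, i < j := fun j hj => lt_of_lt_of_le hik (hs.2.1 j hj)
  have hwlt : ∀ j ∈ s, w i < w j := fun j hj =>
    (hs.2.1 j hj).eq_or_lt.elim (fun h => h ▸ hwik) fun h => hwik.trans (hs.2.2 k hs.1 j hj h)
  refine ⟨Finset.mem_insert_self i s, ?_, ?_⟩
  · simp only [Finset.mem_insert, forall_eq_or_imp, le_refl, true_and]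
    exact fun j hj => (hlt j hj).le
  · simp only [Finset.mem_insert, forall_eq_or_imp, lt_irrefl, IsEmpty.forall_iff, true_and]
    exact ⟨fun j hj _ => hwlt j hj, fun j hj => ⟨fun h => absurd (hlt j hj) (not_lt.mpr h.le),
      hs.2.2 j hj⟩⟩

lemma lisFrom_le_card_largerAfter_add_one (w : Equiv.Perm (Fin n)) (i : Fin n) :
    lisFrom w i ≤ (largerAfter w i).card + 1 :=
  lisFrom_le fun s hs => by
    have := Finset.card_le_card hs.erase_subset
    rw [Finset.card_erase_of_mem hs.1] at this
    omega

lemma lisFrom_le_sub (w : Equiv.Perm (Fin n)) (i : Fin n) : lisFrom w i ≤ n - i :=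
  lisFrom_le fun _ hs => (Finset.card_le_card fun j hj => Finset.mem_Ici.mpr (hs.2.1 j hj)).trans
    (Fin.card_Ici i).le

lemma one_le_lisFrom (w : Equiv.Perm (Fin n)) (i : Fin n) : 1 ≤ lisFrom w i :=
  le_lisFrom (isIncreasingFrom_singleton w i)

lemma lisFrom_eq_sup_add_one (w : Equiv.Perm (Fin n)) (i : Fin n) :
    lisFrom w i = (largerAfter w i).sup (lisFrom w) + 1 := by
  apply le_antisymm
  · refine lisFrom_le fun s hs => ?_
    rcases (s.erase i).eq_empty_or_nonempty with he | hne
    · rw [← Finset.card_erase_add_one hs.1, he]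
      simp
    obtain ⟨k, hk, hkmin⟩ := (s.erase i).exists_min_image id hne
    have hrun : IsIncreasingFrom w k (s.erase i) :=
      ⟨hk, hkmin, fun j hj l hl => hs.2.2 j (Finset.mem_of_mem_erase hj) l
        (Finset.mem_of_mem_erase hl)⟩
    rw [← Finset.card_erase_add_one hs.1]
    exact Nat.add_le_add_right ((le_lisFrom hrun).trans
      (Finset.le_sup (f := lisFrom w) (hs.erase_subset hk))) 1
  · rcases (largerAfter w i).eq_empty_or_nonempty with he | hne
    · simpa [he] using one_le_lisFrom w i
    obtain ⟨k, hk, heq⟩ := Finset.exists_mem_eq_sup _ hne (lisFrom w)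
    obtain ⟨s, hs, hcard⟩ := exists_isIncreasingFrom_card_eq w k
    have hi : i ∉ s := fun h => (mem_largerAfter.mp hk).1.not_ge (hs.2.1 i h)
    rw [heq, ← hcard, ← Finset.card_insert_of_notMem hi]
    exact le_lisFrom (hs.insert hk)

lemma eq_lisFrom_of_forall_eq_sup_add_one {g : Fin n → ℕ}
    (hg : ∀ i, g i = (largerAfter w i).sup g + 1) : g = lisFrom w := by
  funext i
  induction i using WellFoundedGT.induction with
  | _ i ih =>
    rw [hg, lisFrom_eq_sup_add_one]
    congr 1
    exact Finset.sup_congr rfl fun k hk => ih k (mem_largerAfter.mp hk).1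

end lisFrom

section shape

variable {u w : Equiv.Perm (Fin n)}

lemma eps_eq (w : Equiv.Perm (Fin n)) (i : Fin n) : eps w i = n + 1 - lisFrom w i := by
  have := one_le_lisFrom w i
  have := lisFrom_le_sub w i
  have := i.isLt
  unfold eps rajCode
  omega

lemma shape_eq_of_lisFrom_eq_comp (σ : Equiv.Perm (Fin n)) (h : lisFrom u = lisFrom w ∘ σ) :
    shape u = shape w := by
  funext k
  refine Finset.card_equiv σ fun i => ?_
  simp [eps_eq, h]

lemma map_eps_eq_of_shape_eq (h : shape u = shape w) :
    Finset.univ.val.map (eps u) = Finset.univ.val.map (eps w) := by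
  have hcount : ∀ w : Equiv.Perm (Fin n), ∀ v : ℕ,
      (Finset.univ.val.map (eps w)).count v =
        if hv : v - 1 < n ∧ 1 ≤ v then shape w ⟨v - 1, hv.1⟩ else 0 := by
    intro w v
    rw [Multiset.count_map, ← Finset.filter_val, ← Finset.card_def]
    split_ifs with hv
    · exact congrArg Finset.card (Finset.filter_congr fun i _ => by simp only; omega)
    · refine Finset.card_eq_zero.mpr (Finset.filter_eq_empty_iff.mpr fun i _ => ?_)
      have := eps_eq w i
      have := one_le_lisFrom w i
      have := lisFrom_le_sub w i
      omega
  ext v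
  rw [hcount, hcount, h]

lemma raj_eq_of_shape_eq (h : shape u = shape w) : raj u = raj w := by
  have hsum : ∀ w : Equiv.Perm (Fin n), ∑ i, eps w i = ∑ i : Fin n, ((i : ℕ) + 1) + raj w :=
    fun w => Finset.sum_add_distrib
  have := congrArg Multiset.sum (map_eps_eq_of_shape_eq h)
  rw [← Finset.sum_eq_multiset_sum, ← Finset.sum_eq_multiset_sum, hsum, hsum] at this
  omega

end shape

section inversions

variable {w : Equiv.Perm (Fin n)}

lemma invNum_eq_sum_ellCode (w : Equiv.Perm (Fin n)) : invNum w = ∑ i, ellCode w i := by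
  simp only [invNum, ellCode, Finset.card_filter, Fintype.sum_prod_type]

lemma ellCode_add_card_largerAfter (w : Equiv.Perm (Fin n)) (i : Fin n) :
    ellCode w i + (largerAfter w i).card = n - 1 - i := by
  rw [← Fin.card_Ioi, ellCode, largerAfter, Finset.card_filter, Finset.card_filter,
    ← Finset.sum_add_distrib, ← Finset.filter_lt_eq_Ioi, Finset.card_filter]
  refine Finset.sum_congr rfl fun j _ => ?_
  by_cases hij : i < j
  · have hne : w j ≠ w i := fun h => hij.ne' (w.injective h)
    rcases hne.lt_or_gt with h | h <;> simp [hij, h, h.not_gt]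
  · simp [hij]

lemma ellCode_le_rajCode (w : Equiv.Perm (Fin n)) (i : Fin n) : ellCode w i ≤ rajCode w i := by
  have := lisFrom_le_card_largerAfter_add_one w i
  have := ellCode_add_card_largerAfter w i
  have := i.isLt
  unfold rajCode
  omega

lemma invNum_le_raj (w : Equiv.Perm (Fin n)) : invNum w ≤ raj w := by
  rw [invNum_eq_sum_ellCode, raj]
  exact Finset.sum_le_sum fun i _ => ellCode_le_rajCode w i

lemma Dominant.isIncreasingFrom_insert_largerAfter (hw : Dominant w) (i : Fin n) :
    IsIncreasingFrom w i (insert i (largerAfter w i)) := by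
  refine ⟨Finset.mem_insert_self _ _, ?_, ?_⟩
  · simp only [Finset.mem_insert, forall_eq_or_imp, le_refl, true_and]
    exact fun j hj => (mem_largerAfter.mp hj).1.le
  · simp only [Finset.mem_insert, forall_eq_or_imp, lt_irrefl, IsEmpty.forall_iff, true_and]
    refine ⟨fun j hj _ => (mem_largerAfter.mp hj).2, fun j hj => ⟨fun hji => ?_, ?_⟩⟩
    · exact absurd (mem_largerAfter.mp hj).1 (lt_asymm hji)
    · intro l hl hjl
      rw [mem_largerAfter] at hj hl
      refine lt_of_not_ge fun hlj => hw ⟨i, j, l, hj.1, hjl, hl.2, ?_⟩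
      exact lt_of_le_of_ne hlj fun h => hjl.ne (w.injective h.symm)

lemma Dominant.lisFrom_eq (hw : Dominant w) (i : Fin n) :
    lisFrom w i = (largerAfter w i).card + 1 := by
  refine le_antisymm (lisFrom_le_card_largerAfter_add_one w i) ?_
  have := le_lisFrom (hw.isIncreasingFrom_insert_largerAfter i)
  rwa [Finset.card_insert_of_notMem fun h => lt_irrefl i (mem_largerAfter.mp h).1] at this

lemma Dominant.invNum_eq_raj (hw : Dominant w) : invNum w = raj w := by
  rw [invNum_eq_sum_ellCode, raj]
  refine Finset.sum_congr rfl fun i _ => ?_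
  have := hw.lisFrom_eq i
  have := ellCode_add_card_largerAfter w i
  have := i.isLt
  unfold rajCode
  omega

end inversions

section weakOrder

variable {a b v : Equiv.Perm (Fin n)}

lemma eq_one_of_invNum_eq_zero (h : invNum v = 0) : v = 1 := by
  have hmono : StrictMono v := fun x y hxy => by
    refine lt_of_not_ge fun hyx => ?_
    have hmem :
        (x, y) ∈ Finset.univ.filter fun p : Fin n × Fin n => p.1 < p.2 ∧ v p.2 < v p.1 :=
      Finset.mem_filter.mpr ⟨Finset.mem_univ _, hxy,
        lt_of_le_of_ne hyx fun h => hxy.ne' (v.injective h)⟩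
    rw [invNum, Finset.card_eq_zero] at h
    simp [h] at hmem
  exact Equiv.ext fun x => le_antisymm (hmono.le_id x) (hmono.id_le x)

lemma eq_or_invNum_lt_of_leL_or_leR (h : leL a b ∨ leR a b) : a = b ∨ invNum a < invNum b := by
  rcases h with ⟨v, rfl, hv⟩ | ⟨v, rfl, hv⟩ <;>
  rcases (invNum v).eq_zero_or_pos with h0 | hpos
  · simp [eq_one_of_invNum_eq_zero h0]
  · omega
  · simp [eq_one_of_invNum_eq_zero h0]
  · omega

lemma leLR.eq_or_invNum_lt (h : leLR a b) : a = b ∨ invNum a < invNum b := by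
  induction h with
  | refl => exact Or.inl rfl
  | tail _ hstep ih =>
    rcases ih with rfl | hlt
    · exact eq_or_invNum_lt_of_leL_or_leR hstep
    · exact Or.inr ((eq_or_invNum_lt_of_leL_or_leR hstep).elim (· ▸ hlt) hlt.trans)

end weakOrder

section swap

variable {w : Equiv.Perm (Fin n)}

lemma invNum_mul_swap {j j' : Fin n} (hj : j ⋖ j') (hw : w j < w j') :
    invNum (w * Equiv.swap j j') = invNum w + 1 := by
  set σ := Equiv.swap j j'
  have hσσ : ∀ x, σ (σ x) = x := Equiv.swap_apply_self j j'
  have hmem : (j, j') ∈ Finset.univ.filter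
      fun p : Fin n × Fin n => p.1 < p.2 ∧ (w * σ) p.2 < (w * σ) p.1 :=
    Finset.mem_filter.mpr ⟨Finset.mem_univ _, hj.lt, by simpa [σ] using hw⟩
  rw [invNum, ← Finset.card_erase_add_one hmem, invNum]
  congr 1
  -- the other inversions of `w * σ` correspond under `σ` to those of `w`
  refine Finset.card_bij' (fun p _ => (σ p.1, σ p.2)) (fun p _ => (σ p.1, σ p.2)) ?_ ?_ ?_ ?_
  · rintro ⟨x, y⟩ hp
    simp only [Finset.mem_erase, Finset.mem_filter, Finset.mem_univ, true_and, ne_eq,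
      Prod.mk.injEq] at hp ⊢
    simp only [Equiv.Perm.mul_apply] at hp ⊢
    refine ⟨(Equiv.swap_lt_swap_iff_of_covBy hj hp.1 ?_).mpr hp.2.1, hp.2.2⟩
    rintro ⟨rfl, rfl⟩
    exact lt_asymm hj.lt hp.2.1
  · rintro ⟨x, y⟩ hp
    simp only [Finset.mem_erase, Finset.mem_filter, Finset.mem_univ, true_and, ne_eq,
      Prod.mk.injEq] at hp ⊢
    simp only [Equiv.Perm.mul_apply, hσσ] at hp ⊢
    refine ⟨?_, (Equiv.swap_lt_swap_iff_of_covBy hj ?_ ?_).mpr hp.1, hp.2⟩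
    · rintro ⟨hx, hy⟩
      rw [← hσσ x, ← hσσ y, hx, hy] at hp
      exact lt_asymm hj.lt (by simpa [σ] using hp.1)
    · rintro ⟨rfl, rfl⟩
      exact lt_asymm hw hp.2
    · rintro ⟨rfl, rfl⟩
      exact lt_asymm hj.lt hp.1
  · intro p _
    simp [hσσ]
  · intro p _
    simp [hσσ]

lemma invNum_inv (w : Equiv.Perm (Fin n)) : invNum w⁻¹ = invNum w := by
  refine Finset.card_bij' (fun p _ => (w⁻¹ p.2, w⁻¹ p.1)) (fun p _ => (w p.2, w p.1))
    ?_ ?_ ?_ ?_ <;> simp +contextual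

lemma invNum_swap_mul {a b : Fin n} (hab : a ⋖ b) (hw : w⁻¹ a < w⁻¹ b) :
    invNum (Equiv.swap a b * w) = invNum w + 1 := by
  rw [← invNum_inv, mul_inv_rev, Equiv.swap_inv, invNum_mul_swap hab hw, invNum_inv]

lemma invNum_swap {a b : Fin n} (hab : a ⋖ b) : invNum (Equiv.swap a b) = 1 := by
  have hone : invNum (1 : Equiv.Perm (Fin n)) = 0 :=
    Finset.card_eq_zero.mpr (Finset.filter_eq_empty_iff.mpr fun _ _ h => lt_asymm h.1 h.2)
  simpa [hone] using invNum_mul_swap (w := 1) hab hab.lt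

lemma leR_mul_swap {j j' : Fin n} (hj : j ⋖ j') (hw : w j < w j') :
    leR w (w * Equiv.swap j j') :=
  ⟨_, rfl, by rw [invNum_mul_swap hj hw, invNum_swap hj]⟩

lemma leL_swap_mul {p q : Fin n} (hpq : p < q) (hw : w p ⋖ w q) :
    leL w (Equiv.swap (w p) (w q) * w) :=
  ⟨_, rfl, by rw [invNum_swap_mul hw (by simpa using hpq), invNum_swap hw, add_comm]⟩

end swap

section leftSwap

variable {w : Equiv.Perm (Fin n)} {p q : Fin n}

lemma swap_mul_lt_swap_mul_iff (hpq : w p ⋖ w q) {x y : Fin n} (hxy : ¬(x = p ∧ y = q))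
    (hyx : ¬(x = q ∧ y = p)) :
    (Equiv.swap (w p) (w q) * w) x < (Equiv.swap (w p) (w q) * w) y ↔ w x < w y :=
  Equiv.swap_lt_swap_iff_of_covBy hpq (by simpa only [w.injective.eq_iff] using hxy)
    (by simpa only [w.injective.eq_iff] using hyx)

lemma largerAfter_swap_mul_of_ne (hpq : p < q) (hw : w p ⋖ w q) {i : Fin n} (hi : i ≠ p) :
    largerAfter (Equiv.swap (w p) (w q) * w) i = largerAfter w i := by
  ext k
  simp only [mem_largerAfter, and_congr_right_iff]
  intro hik
  refine swap_mul_lt_swap_mul_iff hw (fun h => hi h.1) ?_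
  rintro ⟨rfl, rfl⟩
  exact lt_asymm hpq hik

lemma largerAfter_swap_mul_self (hw : w p ⋖ w q) :
    largerAfter (Equiv.swap (w p) (w q) * w) p = (largerAfter w p).erase q := by
  ext k
  rw [Finset.mem_erase, mem_largerAfter, mem_largerAfter]
  by_cases hk : k = q
  · subst hk
    simp [lt_asymm hw.lt]
  · rw [swap_mul_lt_swap_mul_iff hw (fun h => hk h.2) (fun h => by simp_all)]
    tauto

lemma lisFrom_swap_mul (hpq : p < q) (hw : w p ⋖ w q)
    (hk : ∃ k ∈ (largerAfter w p).erase q, lisFrom w q ≤ lisFrom w k) :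
    lisFrom (Equiv.swap (w p) (w q) * w) = lisFrom w := by
  refine (eq_lisFrom_of_forall_eq_sup_add_one fun i => ?_).symm
  rw [lisFrom_eq_sup_add_one w i]
  by_cases hi : i = p
  · subst hi
    obtain ⟨k, hk, hle⟩ := hk
    rw [largerAfter_swap_mul_self hw,
      Finset.sup_erase_of_le (mem_largerAfter.mpr ⟨hpq, hw.lt⟩) hk hle]
  · rw [largerAfter_swap_mul_of_ne hpq hw hi]

end leftSwap

section rightSwap

variable {w : Equiv.Perm (Fin n)} {j j' : Fin n}

lemma image_largerAfter_mul_swap_of_ne (hj : j ⋖ j') (hw : w j < w j') {i : Fin n}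
    (hi : i ≠ j') :
    (largerAfter (w * Equiv.swap j j') i).image (Equiv.swap j j') =
      largerAfter w (Equiv.swap j j' i) := by
  ext m
  simp only [Finset.mem_image, mem_largerAfter, Equiv.Perm.mul_apply, Equiv.swap_apply_eq_iff,
    exists_eq_right, Equiv.swap_apply_self]
  by_cases hm : Equiv.swap j j' i = j' ∧ m = j
  · obtain ⟨hij, rfl⟩ := hm
    simp [hij, lt_asymm hw]
  · have hi' : ¬(Equiv.swap j j' i = j ∧ m = j') :=
      fun h => hi (by simpa [Equiv.swap_apply_eq_iff] using h.1)
    rw [← Equiv.swap_lt_swap_iff_of_covBy hj hi' hm, Equiv.swap_apply_self]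

lemma image_largerAfter_mul_swap_self (hj : j ⋖ j') :
    (largerAfter (w * Equiv.swap j j') j').image (Equiv.swap j j') =
      (largerAfter w j).erase j' := by
  ext m
  simp only [Finset.mem_image, Finset.mem_erase, mem_largerAfter, Equiv.Perm.mul_apply,
    Equiv.swap_apply_eq_iff, exists_eq_right, Equiv.swap_apply_self, Equiv.swap_apply_right]
  by_cases hmj : m = j
  · subst hmj
    simp
  by_cases hmj' : m = j'
  · subst hmj'
    simp [lt_asymm hj.lt]
  have hlt : j' < m ↔ j < m :=
    ⟨hj.lt.trans, fun h => lt_of_le_of_ne (hj.ge_of_gt h) (Ne.symm hmj')⟩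
  simp [Equiv.swap_apply_of_ne_of_ne hmj hmj', hlt, hmj']

lemma lisFrom_mul_swap (hj : j ⋖ j') (hw : w j < w j')
    (hk : ∃ k ∈ (largerAfter w j).erase j', lisFrom w j' ≤ lisFrom w k) :
    lisFrom (w * Equiv.swap j j') = lisFrom w ∘ Equiv.swap j j' := by
  refine (eq_lisFrom_of_forall_eq_sup_add_one fun i => ?_).symm
  rw [← Finset.sup_image, Function.comp_apply, lisFrom_eq_sup_add_one w]
  by_cases hi : i = j'
  · subst hi
    obtain ⟨k, hk, hle⟩ := hk
    rw [image_largerAfter_mul_swap_self hj, Equiv.swap_apply_right,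
      Finset.sup_erase_of_le (mem_largerAfter.mpr ⟨hj.lt, hw⟩) hk hle]
  · rw [image_largerAfter_mul_swap_of_ne hj hw hi]

end rightSwap

lemma exists_pattern_covBy {w : Equiv.Perm (Fin n)} (hw : ¬Dominant w) :
    ∃ p m q : Fin n, p < m ∧ m < q ∧ w p ⋖ w q ∧ w q < w m := by
  obtain ⟨i, j, k, hij, hjk, hik, hkj⟩ := not_not.mp hw
  -- among the values from `w i` to `w k`, find two consecutive ones on either side of `j`
  obtain ⟨v, v', hvv', hiv, hv'k, hv, hv'⟩ :=
    exists_covBy_of_le_of_not (P := fun v => w⁻¹ v < j) hik.le (by simpa using hij)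
      (by simpa using hjk.le)
  have hv'j : w⁻¹ v' ≠ j := fun h => (hv'k.trans_lt hkj).ne (by rw [← h]; simp)
  refine ⟨w⁻¹ v, j, w⁻¹ v', hv, lt_of_le_of_ne (not_lt.mp hv') (Ne.symm hv'j), ?_, ?_⟩
  · simpa using hvv'
  · simpa using hv'k.trans_lt hkj

lemma exists_leL_or_leR_of_not_dominant {w : Equiv.Perm (Fin n)} (hw : ¬Dominant w) :
    ∃ u, u ≠ w ∧ (leL w u ∨ leR w u) ∧ shape u = shape w := by
  obtain ⟨p, m, q, hpm, hmq, hpq, hqm⟩ := exists_pattern_covBy hw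
  by_cases hk : ∃ k ∈ (largerAfter w p).erase q, lisFrom w q ≤ lisFrom w k
  · exact ⟨_, fun h => hpq.lt.ne (Equiv.swap_eq_one_iff.mp (mul_eq_right.mp h)),
      Or.inl (leL_swap_mul (hpm.trans hmq) hpq),
      shape_eq_of_lisFrom_eq_comp 1 (lisFrom_swap_mul (hpm.trans hmq) hpq hk)⟩
  push Not at hk
  -- the ascent between `p` and `m` at which the values cross `w q`
  obtain ⟨j, j', hj, hpj, hj'm, hjq, hqj'⟩ :=
    exists_covBy_of_le_of_not (P := fun x => w x < w q) hpm.le hpq.lt (lt_asymm hqm)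
  have hj'q : j' ≠ q := (hj'm.trans_lt hmq).ne
  have hwj' : w q < w j' := lt_of_le_of_ne (not_lt.mp hqj') fun h => hj'q (w.injective h).symm
  have hj' : j' ∈ (largerAfter w p).erase q :=
    Finset.mem_erase.mpr ⟨hj'q, mem_largerAfter.mpr ⟨hpj.trans_lt hj.lt, hpq.lt.trans hwj'⟩⟩
  have hq : q ∈ (largerAfter w j).erase j' := Finset.mem_erase.mpr
    ⟨hj'q.symm, mem_largerAfter.mpr ⟨hj.lt.trans_le (hj'm.trans hmq.le), hjq⟩⟩
  exact ⟨_, fun h => hj.lt.ne (Equiv.swap_eq_one_iff.mp (mul_eq_left.mp h)),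
    Or.inr (leR_mul_swap hj (hjq.trans hwj')),
    shape_eq_of_lisFrom_eq_comp _
      (lisFrom_mul_swap hj (hjq.trans hwj') ⟨q, hq, (hk j' hj').le⟩)⟩

/-- `w` is dominant iff `w` is maximal in two-sided weak order among
permutations of its shape. -/
theorem dominant_iff_maximal_in_shape (n : ℕ) (w : Equiv.Perm (Fin n)) :
    Dominant w ↔
      ¬ ∃ u : Equiv.Perm (Fin n), u ≠ w ∧ leLR w u ∧ shape u = shape w := by
  constructor
  · rintro hw ⟨u, hne, hwu, hshape⟩
    have hle : invNum u ≤ invNum w := calc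
      invNum u ≤ raj u := invNum_le_raj u
      _ = raj w := raj_eq_of_shape_eq hshape
      _ = invNum w := hw.invNum_eq_raj.symm
    exact (hwu.eq_or_invNum_lt).elim (fun h => hne h.symm) fun h => hle.not_gt h
  · intro hmax
    by_contra hw
    obtain ⟨u, hne, hstep, hshape⟩ := exists_leL_or_leR_of_not_dominant hw
    exact hmax ⟨u, hne, Relation.ReflTransGen.single hstep, hshape⟩

end RajRegularity
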